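/- Existence of a near-indicator shift function with controlled Laplacian: fix d ∈ ℕ and ε > 0. For every integer L ≥ 1, writing Λ_L = {−L,…,L}^d and Λ_L^− = Λ_{⌈(1−ε/(2d))L⌉}, there exists a function π : ℤ^d → ℝ such that: π_v = 0 for v ∉ Λ_L; |Δπ_v| ≤ C(ε,d)/L² for all v ∈ ℤ^d; π_v ≥ 1 for all v ∈ Λ_L^−; and ‖∇π‖² ≤ C(ε,d) L^{d−2}, where (Δπ)_v = Σ_{u∼v}(π_u − π_v) and ‖∇π‖² = Σ_{u∼v}(π_u − π_v)². -/

import Mathlib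

/-!
Take `π v = ∏ i, g (v i)` for a one-dimensional profile `g` with values in `[-1, 1]`. The
Laplacian of such a product is a sum over the coordinates of second differences of `g`, each
multiplied by a product of values of `g`; similarly the difference of `π` along any lattice edge
is one first difference of `g` times such a product, and only `O(L ^ d)` edges meet the support.
So it suffices to have `g = 1` on `[-M, M]` and `g = 0` off `[-L, L]`, with first differences
`O(1 / L)` and second differences `O(1 / L ^ 2)`. For `L ≥ 2 / δ` (where `δ = ε / (2 d)`) take
`g x = p (x / L)` for a fixed smooth bump `p`: its derivative is Lipschitz, so the mean value
theorem bounds the second differences. For the finitely many smaller `L` the indicator of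
`[-L, L]` works, because all its bounds are constants depending only on `δ`.
-/

open Classical
open scoped BigOperators

noncomputable section

abbrev Vert (d : ℕ) := Fin d → ℤ

def LatAdj {d : ℕ} (u v : Vert d) : Prop := (∑ i, (u i - v i).natAbs) = 1

/-- Full-lattice Laplacian `(Δπ)_v = ∑_{u∼v} (π_u − π_v)`. -/
def lapF {d : ℕ} (π : Vert d → ℝ) (v : Vert d) : ℝ :=
  ∑ᶠ u, if LatAdj u v then π u - π v else 0

/-- Full-lattice Dirichlet energy `‖∇π‖² = ∑_{u∼v} (π_u − π_v)²`
(half the sum over ordered adjacent pairs). -/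
def gradSqF {d : ℕ} (π : Vert d → ℝ) : ℝ :=
  (1 / 2) * ∑ᶠ p : Vert d × Vert d,
    if LatAdj p.1 p.2 then (π p.1 - π p.2) ^ 2 else 0

open Finset Function
open scoped NNReal

section Lattice

variable {d : ℕ}

def latNbhd (v : Vert d) : Finset (Vert d) :=
  (univ ×ˢ {1, -1} : Finset (Fin d × ℤ)).image fun p => update v p.1 (v p.1 + p.2)

lemma latAdj_iff_mem_latNbhd {u v : Vert d} : LatAdj u v ↔ u ∈ latNbhd v := by
  simp only [LatAdj, latNbhd, mem_image, mem_product, mem_univ, true_and, mem_insert,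
    mem_singleton, Prod.exists]
  constructor
  · intro h
    obtain ⟨i, -, hi⟩ := exists_ne_zero_of_sum_ne_zero (h.symm ▸ one_ne_zero)
    have hsplit := add_sum_erase univ (fun j => (u j - v j).natAbs) (mem_univ i)
    have hrest : ∀ j ∈ univ.erase i, (u j - v j).natAbs = 0 :=
      sum_eq_zero_iff.mp (by omega)
    refine ⟨i, u i - v i, by omega, funext fun j => ?_⟩
    rcases eq_or_ne j i with rfl | hj
    · simp
    · have := hrest j (mem_erase.mpr ⟨hj, mem_univ j⟩)
      rw [update_of_ne hj]
      omega
  · rintro ⟨i, s, hs, rfl⟩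
    rw [sum_eq_single i (fun j _ hj => by simp [update_of_ne hj]) (by simp)]
    rcases hs with rfl | rfl <;> simp

lemma card_latNbhd_le (v : Vert d) : #(latNbhd v) ≤ 2 * d :=
  card_image_le.trans (by simp [mul_comm])

lemma LatAdj.symm {u v : Vert d} (h : LatAdj u v) : LatAdj v u := by
  unfold LatAdj at *
  rw [← h]
  exact sum_congr rfl fun i _ => by rw [← Int.natAbs_neg, neg_sub]

lemma LatAdj.abs_sub_le {u v : Vert d} (h : LatAdj u v) (i : Fin d) : |u i - v i| ≤ 1 := by
  have := single_le_sum (f := fun j => (u j - v j).natAbs) (fun j _ => Nat.zero_le _) (mem_univ i)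
  rw [LatAdj] at h
  rw [abs_le]
  omega

lemma finsum_latAdj_eq_sum (f : Vert d → ℝ) (v : Vert d) :
    (∑ᶠ u, if LatAdj u v then f u else 0) = ∑ u ∈ latNbhd v, f u := by
  rw [finsum_eq_sum_of_support_subset _ (s := latNbhd v)]
  · exact sum_congr rfl fun u hu => if_pos (latAdj_iff_mem_latNbhd.mpr hu)
  · intro u hu
    by_contra h
    exact hu (if_neg fun hadj => h (latAdj_iff_mem_latNbhd.mp hadj))

lemma lapF_eq_sum (π : Vert d → ℝ) (v : Vert d) :
    lapF π v = ∑ i, (π (update v i (v i + 1)) + π (update v i (v i - 1)) - 2 * π v) := by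
  have hinj : Set.InjOn (fun p : Fin d × ℤ => update v p.1 (v p.1 + p.2))
      ↑(univ ×ˢ {1, -1} : Finset (Fin d × ℤ)) := by
    rintro ⟨i, s⟩ hs ⟨j, t⟩ ht heq
    simp only [coe_product, coe_univ, Set.mem_prod, Set.mem_univ, true_and, coe_insert,
      coe_singleton, Set.mem_insert_iff, Set.mem_singleton_iff] at hs ht
    have hi := congrFun heq i
    rcases eq_or_ne i j with rfl | hij
    · simp only [update_self, add_right_inj] at hi
      rw [hi]
    · simp only [update_self, update_of_ne hij] at hi
      omega
  rw [lapF, finsum_latAdj_eq_sum, latNbhd, sum_image hinj, sum_product]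
  refine sum_congr rfl fun i _ => ?_
  rw [sum_pair (by decide), ← sub_eq_add_neg]
  ring

def latBox (d R : ℕ) : Finset (Vert d) :=
  Fintype.piFinset fun _ => Icc (-(R : ℤ)) R

lemma mem_latBox {R : ℕ} {v : Vert d} : v ∈ latBox d R ↔ ∀ i, |v i| ≤ R := by
  simp [latBox, abs_le]

lemma card_latBox (R : ℕ) : #(latBox d R) = (2 * R + 1) ^ d := by
  simp only [latBox, Fintype.card_piFinset, Int.card_Icc, prod_const, card_univ,
    Fintype.card_fin]
  congr 1
  omega

lemma support_gradSq_summand_subset {π : Vert d → ℝ} {R : ℕ}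
    (hπ : ∀ v : Vert d, ¬ (∀ i, |v i| ≤ (R : ℤ)) → π v = 0) :
    support (fun p : Vert d × Vert d => if LatAdj p.1 p.2 then (π p.1 - π p.2) ^ 2 else 0) ⊆
      ↑(latBox d (R + 1) ×ˢ latBox d (R + 1)) := by
  have hS : ∀ u v, LatAdj u v → π u ≠ 0 → u ∈ latBox d (R + 1) ∧ v ∈ latBox d (R + 1) := by
    intro u v huv hu
    have hu' : ∀ i, |u i| ≤ R := by_contra fun h => hu (hπ u h)
    simp only [mem_latBox]
    refine ⟨fun i => by push_cast; linarith [hu' i], fun i => ?_⟩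
    have := abs_sub_abs_le_abs_sub (v i) (u i)
    rw [abs_sub_comm] at this
    push_cast
    linarith [hu' i, huv.abs_sub_le i]
  rintro ⟨u, v⟩ huv
  have hadj : LatAdj u v := by_contra fun h => huv (if_neg h)
  simp only [coe_product, Set.mem_prod, mem_coe]
  by_cases hu : π u = 0
  · have hv : π v ≠ 0 := fun hv => huv (by simp [hu, hv])
    exact (hS v u hadj.symm hv).symm
  · exact hS u v hadj hu

lemma gradSqF_le {π : Vert d → ℝ} {R : ℕ} {A : ℝ}
    (hπ : ∀ v : Vert d, ¬ (∀ i, |v i| ≤ (R : ℤ)) → π v = 0)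
    (hA : ∀ u v : Vert d, LatAdj u v → |π u - π v| ≤ A) :
    gradSqF π ≤ d * (2 * R + 3) ^ d * A ^ 2 := by
  set S := latBox d (R + 1)
  have hinner : ∀ v, ∑ u ∈ S, (if LatAdj u v then (π u - π v) ^ 2 else 0) ≤ 2 * d * A ^ 2 := by
    intro v
    rw [← sum_filter]
    calc _ ≤ ∑ u ∈ latNbhd v, (π u - π v) ^ 2 :=
          sum_le_sum_of_subset_of_nonneg
            (fun u hu => latAdj_iff_mem_latNbhd.mp (mem_filter.mp hu).2)
            (fun _ _ _ => sq_nonneg _)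
      _ ≤ #(latNbhd v) • A ^ 2 := sum_le_card_nsmul _ _ _ fun u hu =>
          sq_le_sq.mpr ((hA u v (latAdj_iff_mem_latNbhd.mpr hu)).trans (le_abs_self A))
      _ ≤ 2 * d * A ^ 2 := by
          rw [nsmul_eq_mul]
          gcongr
          exact_mod_cast card_latNbhd_le v
  rw [gradSqF, finsum_eq_sum_of_support_subset _ (support_gradSq_summand_subset hπ),
    sum_product_right]
  calc 1 / 2 * ∑ v ∈ S, ∑ u ∈ S, (if LatAdj u v then (π u - π v) ^ 2 else 0)
      ≤ 1 / 2 * ∑ _v ∈ S, 2 * d * A ^ 2 := by gcongr with v; exact hinner v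
    _ = d * (2 * R + 3) ^ d * A ^ 2 := by
      rw [sum_const, card_latBox, nsmul_eq_mul]
      push_cast
      ring

end Lattice

section BoxProd

variable {d : ℕ} {g : ℤ → ℝ}

def boxProd (g : ℤ → ℝ) (v : Vert d) : ℝ := ∏ i, g (v i)

lemma boxProd_eq_zero {R : ℤ} (hg : ∀ x, R < |x| → g x = 0) {v : Vert d}
    (hv : ¬ ∀ i, |v i| ≤ R) : boxProd g v = 0 := by
  obtain ⟨i, hi⟩ := not_forall.mp hv
  exact prod_eq_zero (mem_univ i) (hg _ (not_le.mp hi))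

lemma boxProd_eq_one {R : ℤ} (hg : ∀ x, |x| ≤ R → g x = 1) {v : Vert d}
    (hv : ∀ i, |v i| ≤ R) : boxProd g v = 1 :=
  prod_eq_one fun i _ => hg _ (hv i)

lemma boxProd_update_sub (g : ℤ → ℝ) (v : Vert d) (i : Fin d) (c : ℤ) :
    boxProd g (update v i c) - boxProd g v = (g c - g (v i)) * ∏ j ∈ univ.erase i, g (v j) := by
  have hrest : ∏ j ∈ univ.erase i, g (update v i c j) = ∏ j ∈ univ.erase i, g (v j) :=
    prod_congr rfl fun j hj => by rw [update_of_ne (ne_of_mem_erase hj)]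
  rw [boxProd, boxProd, ← mul_prod_erase univ _ (mem_univ i),
    ← mul_prod_erase univ (fun j => g (v j)) (mem_univ i), hrest, update_self]
  ring

lemma abs_prod_le_one (hg : ∀ x, |g x| ≤ 1) (s : Finset (Fin d)) (v : Vert d) :
    |∏ j ∈ s, g (v j)| ≤ 1 := by
  rw [abs_prod]
  exact prod_le_one (fun _ _ => abs_nonneg _) fun j _ => hg _

lemma lapF_boxProd (g : ℤ → ℝ) (v : Vert d) :
    lapF (boxProd g) v =
      ∑ i, (g (v i + 1) + g (v i - 1) - 2 * g (v i)) * ∏ j ∈ univ.erase i, g (v j) := by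
  rw [lapF_eq_sum]
  refine sum_congr rfl fun i _ => ?_
  linear_combination boxProd_update_sub g v i (v i + 1) + boxProd_update_sub g v i (v i - 1)

lemma abs_lapF_boxProd_le {B : ℝ} (hg : ∀ x, |g x| ≤ 1)
    (hB : ∀ x, |g (x + 1) + g (x - 1) - 2 * g x| ≤ B) (v : Vert d) :
    |lapF (boxProd g) v| ≤ d * B := by
  rw [lapF_boxProd]
  calc _ ≤ ∑ i, |(g (v i + 1) + g (v i - 1) - 2 * g (v i)) * ∏ j ∈ univ.erase i, g (v j)| :=
        abs_sum_le_sum_abs _ _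
    _ ≤ ∑ _i : Fin d, B := sum_le_sum fun i _ => by
        rw [abs_mul]
        exact (mul_le_of_le_one_right (abs_nonneg _) (abs_prod_le_one hg _ _)).trans (hB _)
    _ = d * B := by simp

lemma abs_boxProd_sub_le {A : ℝ} (hg : ∀ x, |g x| ≤ 1) (hA : ∀ x, |g (x + 1) - g x| ≤ A)
    {u v : Vert d} (h : LatAdj u v) : |boxProd g u - boxProd g v| ≤ A := by
  obtain ⟨⟨i, s⟩, hs, rfl⟩ := mem_image.mp (latAdj_iff_mem_latNbhd.mp h)
  rw [boxProd_update_sub, abs_mul]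
  refine (mul_le_of_le_one_right (abs_nonneg _) (abs_prod_le_one hg _ _)).trans ?_
  simp only [mem_product, mem_univ, mem_insert, mem_singleton, true_and] at hs
  rcases hs with rfl | rfl
  · exact hA _
  · have := hA (v i + -1)
    rwa [neg_add_cancel_right, abs_sub_comm] at this

end BoxProd

lemma abs_add_sub_two_mul_le_of_lipschitzWith_deriv {f : ℝ → ℝ} {K : ℝ≥0}
    (hf : Differentiable ℝ f) (hf' : LipschitzWith K (deriv f)) (t : ℝ) {h : ℝ} (hh : 0 < h) :
    |f (t + h) + f (t - h) - 2 * f t| ≤ 2 * K * h ^ 2 := by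
  obtain ⟨a, ha, hfa⟩ := exists_deriv_eq_slope f (by linarith : t < t + h)
    hf.continuous.continuousOn hf.differentiableOn
  obtain ⟨b, hb, hfb⟩ := exists_deriv_eq_slope f (by linarith : t - h < t)
    hf.continuous.continuousOn hf.differentiableOn
  rw [add_sub_cancel_left] at hfa
  rw [sub_sub_cancel] at hfb
  have hab : |a - b| ≤ 2 * h := by
    rw [abs_le]
    constructor <;> linarith [ha.1, ha.2, hb.1, hb.2]
  have hsplit : f (t + h) + f (t - h) - 2 * f t = h * (deriv f a - deriv f b) := by
    rw [hfa, hfb]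
    field_simp
    ring
  calc |f (t + h) + f (t - h) - 2 * f t| = h * |deriv f a - deriv f b| := by
        rw [hsplit, abs_mul, abs_of_pos hh]
    _ ≤ h * (K * (2 * h)) := by
        gcongr
        exact (hf'.dist_le_mul a b).trans (by rw [Real.dist_eq]; gcongr)
    _ = 2 * K * h ^ 2 := by ring

lemma exists_smooth_cutoff {r : ℝ} (hr0 : 0 < r) (hr1 : r < 1) :
    ∃ (p : ℝ → ℝ) (A B : ℝ≥0), (∀ t, |p t| ≤ 1) ∧ (∀ t, |t| ≤ r → p t = 1) ∧
      (∀ t, 1 ≤ |t| → p t = 0) ∧ Differentiable ℝ p ∧ LipschitzWith A p ∧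
      LipschitzWith B (deriv p) := by
  let φ : ContDiffBump (0 : ℝ) := ⟨r, 1, hr0, hr1⟩
  obtain ⟨A, hA⟩ := (φ.contDiff (n := 1)).lipschitzWith_of_hasCompactSupport
    φ.hasCompactSupport one_ne_zero
  obtain ⟨B, hB⟩ := ((φ.contDiff (n := 2)).deriv' (n := 1)).lipschitzWith_of_hasCompactSupport
    φ.hasCompactSupport.deriv one_ne_zero
  refine ⟨φ, A, B, fun t => abs_le.mpr ⟨by linarith [φ.nonneg (x := t)], φ.le_one⟩,
    fun t ht => φ.one_of_mem_closedBall ?_, fun t ht => φ.zero_of_le_dist ?_,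
    φ.contDiff.differentiable one_ne_zero, hA, hB⟩
  · simpa [Real.norm_eq_abs] using ht
  · simpa [Real.dist_eq] using ht

structure IsCutoffProfile (g : ℤ → ℝ) (M : ℤ) (L : ℕ) (A B : ℝ) : Prop where
  abs_le_one : ∀ x, |g x| ≤ 1
  eq_zero : ∀ x, (L : ℤ) < |x| → g x = 0
  eq_one : ∀ x, |x| ≤ M → g x = 1
  abs_sub_le : ∀ x, |g (x + 1) - g x| ≤ A
  abs_secondDiff_le : ∀ x, |g (x + 1) + g (x - 1) - 2 * g x| ≤ B

namespace IsCutoffProfile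

variable {g : ℤ → ℝ} {M M' : ℤ} {L : ℕ} {A A' B B' : ℝ}

lemma mono (hg : IsCutoffProfile g M L A B) (hM : M' ≤ M) (hA : A ≤ A') (hB : B ≤ B') :
    IsCutoffProfile g M' L A' B' where
  abs_le_one := hg.abs_le_one
  eq_zero := hg.eq_zero
  eq_one x hx := hg.eq_one x (hx.trans hM)
  abs_sub_le x := (hg.abs_sub_le x).trans hA
  abs_secondDiff_le x := (hg.abs_secondDiff_le x).trans hB

lemma indicator (L : ℕ) :
    IsCutoffProfile (fun x => if |x| ≤ (L : ℤ) then 1 else 0) L L 1 2 where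
  abs_le_one x := by split_ifs <;> norm_num
  eq_zero x hx := if_neg hx.not_ge
  eq_one x hx := if_pos hx
  abs_sub_le x := by split_ifs <;> norm_num
  abs_secondDiff_le x := by split_ifs <;> norm_num

lemma rescale {p : ℝ → ℝ} {r : ℝ} {A B : ℝ≥0} (hp : ∀ t, |p t| ≤ 1)
    (hpr : ∀ t, |t| ≤ r → p t = 1) (hp0 : ∀ t, 1 ≤ |t| → p t = 0) (hpd : Differentiable ℝ p)
    (hpA : LipschitzWith A p) (hpB : LipschitzWith B (deriv p)) {L : ℕ} (hL : 0 < L) {M : ℤ}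
    (hM : (M : ℝ) ≤ r * L) :
    IsCutoffProfile (fun x : ℤ => p (x / L)) M L (A / L) (2 * B / L ^ 2) := by
  have hL' : (0 : ℝ) < L := by exact_mod_cast hL
  refine ⟨fun x => hp _, fun x hx => hp0 _ ?_, fun x hx => hpr _ ?_, fun x => ?_, fun x => ?_⟩
  · rw [abs_div, abs_of_pos hL', one_le_div hL', ← Int.cast_abs]
    exact_mod_cast hx.le
  · rw [abs_div, abs_of_pos hL', div_le_iff₀ hL', ← Int.cast_abs]
    exact (Int.cast_le.mpr hx).trans hM
  · push_cast
    rw [add_div, ← Real.dist_eq]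
    refine (hpA.dist_le_mul _ _).trans_eq ?_
    rw [Real.dist_eq, add_sub_cancel_left, abs_of_pos (by positivity)]
    ring
  · push_cast
    rw [add_div, sub_div]
    refine (abs_add_sub_two_mul_le_of_lipschitzWith_deriv hpd hpB _ ?_).trans_eq ?_
    · positivity
    · ring

end IsCutoffProfile

lemma exists_isCutoffProfile {δ : ℝ} (hδ : 0 < δ) :
    ∃ K : ℝ, 0 ≤ K ∧ ∀ L : ℕ, 1 ≤ L →
      ∃ g : ℤ → ℝ, IsCutoffProfile g ⌈(1 - δ) * L⌉ L (K / L) (K / L ^ 2) := by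
  obtain ⟨p, A, B, hp, hpr, hp0, hpd, hpA, hpB⟩ :=
    exists_smooth_cutoff (r := max (1 - δ / 2) (1 / 2)) (by positivity)
      (max_lt (by linarith) (by norm_num))
  refine ⟨A + 2 * B + 2 / δ + 2 * (2 / δ) ^ 2, by positivity, fun L hL => ?_⟩
  have hL' : (1 : ℝ) ≤ L := by exact_mod_cast hL
  rcases lt_or_ge (L : ℝ) (2 / δ) with hsmall | hlarge
  · refine ⟨_, (IsCutoffProfile.indicator L).mono ?_ ?_ ?_⟩
    · exact Int.ceil_le.mpr (by push_cast; nlinarith)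
    · rw [le_div_iff₀ (by positivity)]
      nlinarith [sq_nonneg (2 / δ), A.2, B.2]
    · have : (L : ℝ) ^ 2 < (2 / δ) ^ 2 := by gcongr
      rw [le_div_iff₀ (by positivity)]
      nlinarith [A.2, B.2]
  · have hδL : 2 ≤ δ * L := by rwa [div_le_iff₀ hδ, mul_comm] at hlarge
    have hceil := Int.ceil_lt_add_one ((1 - δ) * L)
    have hM : (⌈(1 - δ) * L⌉ : ℝ) ≤ max (1 - δ / 2) (1 / 2) * L := by
      nlinarith [le_max_left (1 - δ / 2) (1 / 2)]
    refine ⟨_, (IsCutoffProfile.rescale hp hpr hp0 hpd hpA hpB (by omega) hM).mono le_rfl ?_ ?_⟩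
    all_goals
      gcongr
      linarith [sq_nonneg (2 / δ), A.2, B.2, div_pos two_pos hδ]

lemma two_mul_add_three_pow_div_sq_le (d : ℕ) {L : ℝ} (hL : 1 ≤ L) :
    (2 * L + 3) ^ d / L ^ 2 ≤ 5 ^ d * L ^ ((d : ℤ) - 2) := by
  rw [zpow_sub₀ (by positivity), zpow_natCast, zpow_two, ← sq, mul_div_assoc', ← mul_pow]
  gcongr
  linarith

/-- existence of a near-indicator shift function with controlled
Laplacian.  For `d ≥ 1` and `ε > 0` there is `C = C(ε,d) > 0` such that for
every `L ≥ 1` there is `π : ℤ^d → ℝ` vanishing off `Λ_L`, with `|Δπ| ≤ C/L²`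
everywhere, `π ≥ 1` on `Λ_L^- = Λ_{⌈(1−ε/(2d))L⌉}`, and `‖∇π‖² ≤ C L^{d−2}`. -/
theorem near_indicator_shift (d : ℕ) (hd : 0 < d) (ε : ℝ) (hε : 0 < ε) :
    ∃ C : ℝ, 0 < C ∧ ∀ L : ℕ, 1 ≤ L →
      ∃ π : Vert d → ℝ,
        (∀ v : Vert d, ¬ (∀ i, |v i| ≤ (L : ℤ)) → π v = 0) ∧
        (∀ v : Vert d, |lapF π v| ≤ C / (L : ℝ) ^ 2) ∧
        (∀ v : Vert d, (∀ i, |v i| ≤ ⌈(1 - ε / (2 * (d : ℝ))) * (L : ℝ)⌉) → 1 ≤ π v) ∧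
        gradSqF π ≤ C * (L : ℝ) ^ ((d : ℤ) - 2) := by
  obtain ⟨K, hK, hprofile⟩ := exists_isCutoffProfile (δ := ε / (2 * d)) (by positivity)
  refine ⟨d * K + d * 5 ^ d * K ^ 2 + 1, by positivity, fun L hL => ?_⟩
  obtain ⟨g, hg⟩ := hprofile L hL
  have hL' : (1 : ℝ) ≤ L := by exact_mod_cast hL
  refine ⟨boxProd g, fun v hv => boxProd_eq_zero hg.eq_zero hv, fun v => ?_,
    fun v hv => (boxProd_eq_one hg.eq_one hv).ge, ?_⟩
  · refine (abs_lapF_boxProd_le hg.abs_le_one hg.abs_secondDiff_le v).trans ?_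
    rw [← mul_div_assoc]
    gcongr
    linarith [show 0 ≤ (d : ℝ) * 5 ^ d * K ^ 2 by positivity]
  · refine (gradSqF_le (fun v hv => boxProd_eq_zero hg.eq_zero hv)
      fun u v h => abs_boxProd_sub_le hg.abs_le_one hg.abs_sub_le h).trans ?_
    calc (d : ℝ) * (2 * L + 3) ^ d * (K / L) ^ 2 = d * K ^ 2 * ((2 * L + 3) ^ d / L ^ 2) := by
          ring
      _ ≤ d * K ^ 2 * (5 ^ d * L ^ ((d : ℤ) - 2)) := by
          gcongr
          exact two_mul_add_three_pow_div_sq_le d hL'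
      _ ≤ _ := by
          rw [← mul_assoc]
          gcongr
          nlinarith [mul_nonneg (Nat.cast_nonneg d) hK]
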